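/- arXiv:2408.06386 — 3 statements merged into one kernel-verified Lean document; each statement's English description precedes it below -/
import Mathlib

section
/- For a Hermitian matrix ρ, the vector of diagonal entries of ρ is majorized by the vector of eigenvalues of ρ (Schur's theorem). -/
open Matrix

/-- Sum of the `k` largest entries of `x`. -/
noncomputable def kLargestSum {n : ℕ} (x : Fin n → ℝ) (k : ℕ) : ℝ :=
  sSup ((fun s : Finset (Fin n) => ∑ i ∈ s, x i) '' {s | s.card = k})

/-- `x` is majorized by `y` in `ℝⁿ`. -/
def Maj {n : ℕ} (x y : Fin n → ℝ) : Prop :=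
  (∀ k, k < n → kLargestSum x k ≤ kLargestSum y k) ∧ (∑ i, x i = ∑ i, y i)

/-!
Write `ρ = U diag(λ) U*` with `U` unitary. Then `ρᵢᵢ = ∑ⱼ |Uᵢⱼ|² λⱼ`, and the matrix `(|Uᵢⱼ|²)` is
doubly stochastic because the rows and columns of `U` are unit vectors. For a doubly stochastic `W`,
the sum of any `k` entries of `W λ` is `∑ⱼ cⱼ λⱼ` with weights `0 ≤ cⱼ ≤ 1` of total mass `k`; such a
combination is at most the sum of the `k` largest `λⱼ`, as one sees by comparing `c` with the
indicator of those indices against a threshold separating them from the rest.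
-/

open Finset

theorem Finset.exists_card_eq_forall_le {ι α : Type*} [Fintype ι] [LinearOrder α] (f : ι → α)
    {k : ℕ} (hk : k ≤ Fintype.card ι) :
    ∃ t : Finset ι, #t = k ∧ ∀ i ∈ t, ∀ j ∉ t, f j ≤ f i := by
  classical
  induction k with
  | zero => exact ⟨∅, rfl, by simp⟩
  | succ k ih =>
    obtain ⟨t, htk, htop⟩ := ih (Nat.le_of_succ_le hk)
    have hne : tᶜ.Nonempty := by
      rw [← card_pos, card_compl, htk]
      omega
    obtain ⟨j, hj, hjmax⟩ := exists_max_image tᶜ f hne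
    rw [mem_compl] at hj
    refine ⟨insert j t, by rw [card_insert_of_notMem hj, htk], fun i hi m hm => ?_⟩
    rw [mem_insert, not_or] at hm
    rcases mem_insert.mp hi with rfl | hi
    · exact hjmax m (mem_compl.mpr hm.2)
    · exact htop i hi m hm.2

theorem sum_mul_le_sum_of_forall_le {ι : Type*} [Fintype ι] {c f : ι → ℝ} {t : Finset ι}
    (ht : ∀ i ∈ t, ∀ j ∉ t, f j ≤ f i) (hc0 : ∀ j, 0 ≤ c j) (hc1 : ∀ j, c j ≤ 1)
    (hc : ∑ j, c j = #t) :
    ∑ j, c j * f j ≤ ∑ i ∈ t, f i := by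
  classical
  obtain ⟨a, hat, hant⟩ : ∃ a, (∀ i ∈ t, a ≤ f i) ∧ ∀ j ∉ t, f j ≤ a := by
    rcases t.eq_empty_or_nonempty with rfl | hne
    · obtain ⟨a, ha⟩ := (Set.finite_range f).bddAbove
      exact ⟨a, by simp, fun j _ => ha ⟨j, rfl⟩⟩
    · obtain ⟨i₀, hi₀, hmin⟩ := t.exists_min_image f hne
      exact ⟨f i₀, hmin, ht i₀ hi₀⟩
  set d : ι → ℝ := fun j => if j ∈ t then 1 else 0
  -- `c` and the indicator `d` of `t` have the same total mass, so the threshold `a` cancels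
  have hsplit : ∑ j, (c j - d j) * (f j - a) = ∑ j, c j * f j - ∑ i ∈ t, f i := by
    simp only [sub_mul, mul_sub, sum_sub_distrib, ← sum_mul, hc, d, ite_mul, one_mul, zero_mul,
      sum_ite_mem, univ_inter, sum_const, nsmul_eq_mul]
    ring
  have hterm : ∀ j, (c j - d j) * (f j - a) ≤ 0 := fun j => by
    by_cases hj : j ∈ t
    · simp only [d, hj, if_true]
      exact mul_nonpos_of_nonpos_of_nonneg (by linarith [hc1 j]) (by linarith [hat j hj])
    · simp only [d, hj, if_false]
      exact mul_nonpos_of_nonneg_of_nonpos (by linarith [hc0 j]) (by linarith [hant j hj])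
  linarith [sum_nonpos fun j (_ : j ∈ univ) => hterm j]

theorem le_kLargestSum {n : ℕ} (x : Fin n → ℝ) (s : Finset (Fin n)) :
    ∑ i ∈ s, x i ≤ kLargestSum x #s :=
  le_csSup ((Set.toFinite _).image _).bddAbove ⟨s, rfl, rfl⟩

theorem kLargestSum_le {n : ℕ} {x : Fin n → ℝ} {k : ℕ} {C : ℝ} (hk : k ≤ n)
    (h : ∀ s : Finset (Fin n), #s = k → ∑ i ∈ s, x i ≤ C) : kLargestSum x k ≤ C := by
  obtain ⟨s, -, hs⟩ := exists_subset_card_eq (s := (univ : Finset (Fin n))) (by simpa using hk)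
  exact csSup_le ⟨_, s, hs, rfl⟩ (by rintro _ ⟨s, hs, rfl⟩; exact h s hs)

theorem maj_mulVec_of_mem_doublyStochastic {n : ℕ} {W : Matrix (Fin n) (Fin n) ℝ}
    (hW : W ∈ doublyStochastic ℝ (Fin n)) (y : Fin n → ℝ) : Maj (W *ᵥ y) y := by
  refine ⟨fun k hk => kLargestSum_le hk.le fun s hs => ?_, sum_mulVec_of_mem_doublyStochastic hW⟩
  obtain ⟨t, htk, htop⟩ := exists_card_eq_forall_le y (k := k) (by simpa using hk.le)
  have hc0 (j : Fin n) : 0 ≤ ∑ i ∈ s, W i j :=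
    sum_nonneg fun i _ => nonneg_of_mem_doublyStochastic hW
  have hc1 (j : Fin n) : ∑ i ∈ s, W i j ≤ 1 :=
    (sum_le_sum_of_subset_of_nonneg (subset_univ s) fun i _ _ =>
      nonneg_of_mem_doublyStochastic hW).trans_eq (sum_col_of_mem_doublyStochastic hW j)
  have hc : ∑ j, ∑ i ∈ s, W i j = #t := by
    rw [sum_comm, sum_congr rfl fun i _ => sum_row_of_mem_doublyStochastic hW i]
    simp [hs, htk]
  calc ∑ i ∈ s, (W *ᵥ y) i = ∑ j, (∑ i ∈ s, W i j) * y j := by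
        simp only [mulVec, dotProduct, sum_mul]
        exact sum_comm
    _ ≤ ∑ i ∈ t, y i := sum_mul_le_sum_of_forall_le htop hc0 hc1 hc
    _ ≤ kLargestSum y k := htk ▸ le_kLargestSum y t

theorem Matrix.map_norm_sq_mem_doublyStochastic {𝕜 n : Type*} [RCLike 𝕜] [Fintype n]
    [DecidableEq n] {U : Matrix n n 𝕜} (hU : U ∈ unitaryGroup n 𝕜) :
    U.map (‖·‖ ^ 2) ∈ doublyStochastic ℝ n := by
  have hrow (i : n) : ∑ j, ‖U i j‖ ^ 2 = 1 := by
    have h := congrFun₂ (mem_unitaryGroup_iff.mp hU) i i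
    simp only [mul_apply, star_apply, RCLike.star_def, RCLike.mul_conj, one_apply_eq] at h
    exact_mod_cast h
  have hcol (j : n) : ∑ i, ‖U i j‖ ^ 2 = 1 := by
    have h := congrFun₂ (mem_unitaryGroup_iff'.mp hU) j j
    simp only [mul_apply, star_apply, RCLike.star_def, RCLike.conj_mul, one_apply_eq] at h
    exact_mod_cast h
  exact mem_doublyStochastic_iff_sum.mpr ⟨fun _ _ => sq_nonneg _, hrow, hcol⟩

theorem Matrix.IsHermitian.re_diag_eq_mulVec_eigenvalues {𝕜 n : Type*} [RCLike 𝕜] [Fintype n]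
    [DecidableEq n] {A : Matrix n n 𝕜} (hA : A.IsHermitian) :
    (fun i => RCLike.re (A i i)) =
      (hA.eigenvectorUnitary : Matrix n n 𝕜).map (‖·‖ ^ 2) *ᵥ hA.eigenvalues := by
  ext i
  conv_lhs => rw [hA.spectral_theorem, Unitary.conjStarAlgAut_apply]
  rw [mul_apply, map_sum]
  refine sum_congr rfl fun j _ => ?_
  rw [mul_diagonal, star_apply, RCLike.star_def, Function.comp_apply, mul_right_comm,
    RCLike.mul_conj, ← RCLike.ofReal_pow, ← RCLike.ofReal_mul, RCLike.ofReal_re]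
  rfl

/-- Schur's theorem: the diagonal of a Hermitian matrix is majorized by its eigenvalues. -/
theorem diag_majorized_by_eigenvalues {n : ℕ} (ρ : Matrix (Fin n) (Fin n) ℂ)
    (hρ : ρ.IsHermitian) :
    Maj (fun i => (ρ i i).re) hρ.eigenvalues := by
  exact hρ.re_diag_eq_mulVec_eigenvalues ▸ maj_mulVec_of_mem_doublyStochastic
    (map_norm_sq_mem_doublyStochastic hρ.eigenvectorUnitary.2) hρ.eigenvalues
end

section
/- Let λ₁, λ₂ ∈ Δₙ↓ be ordered probability vectors. Then λ₁ ≺ λ₂ if and only if for every Hermitian matrix A, the interval [λ₁·λ↑(A), λ₁·λ↓(A)] is contained in [λ₂·λ↑(A), λ₂·λ↓(A)], where λ↓(A) and λ↑(A) are the eigenvalues of A in nonincreasing and nondecreasing order. -/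
open Matrix

/-- Partial sum of the first `k` entries. -/
def psum {n : ℕ} (x : Fin n → ℝ) (k : ℕ) : ℝ :=
  ∑ i ∈ Finset.univ.filter (fun i : Fin n => (i : ℕ) < k), x i

/-- Majorization for nonincreasingly ordered vectors. -/
def MajS {n : ℕ} (x y : Fin n → ℝ) : Prop :=
  (∀ k, k < n → psum x k ≤ psum y k) ∧ (∑ i, x i = ∑ i, y i)

/-- Membership in `Δₙ↓`: nonnegative, nonincreasing, summing to 1. -/
def memDeltaDown {n : ℕ} (x : Fin n → ℝ) : Prop :=
  (∀ i, 0 ≤ x i) ∧ Antitone x ∧ ∑ i, x i = 1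

/-- `x` rearranged in nondecreasing order. -/
noncomputable def sortAsc {n : ℕ} (x : Fin n → ℝ) : Fin n → ℝ := x ∘ (Tuple.sort x)

/-- `x` rearranged in nonincreasing order. -/
noncomputable def sortDesc {n : ℕ} (x : Fin n → ℝ) : Fin n → ℝ := fun i => sortAsc x i.rev

/-! Both sides are equivalent to `l₁ · μ ≤ l₂ · μ` for every nonincreasing `μ`. For majorization
this is Abel summation in one direction and testing against the indicators of initial segments
(and against `±1`) in the other. The endpoints of the intervals are such pairings with
`μ = λ↓(A)` and `μ = -λ↑(A)`; conversely every nonincreasing `μ` is `λ↓` of the Hermitian matrix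
`diagonal μ`, and the `l₁`-interval is nonempty by the rearrangement inequality, so its inclusion
compares the upper endpoints. -/

open Finset Polynomial

section Sorting

variable {n : ℕ}

lemma monotone_sortAsc (f : Fin n → ℝ) : Monotone (sortAsc f) :=
  Tuple.monotone_sort f

lemma antitone_sortDesc (f : Fin n → ℝ) : Antitone (sortDesc f) :=
  fun _ _ hij => monotone_sortAsc f (Fin.rev_le_rev.mpr hij)

lemma sortAsc_of_monotone {f : Fin n → ℝ} (hf : Monotone f) : sortAsc f = f := by
  rw [sortAsc, Tuple.sort_eq_refl_iff_monotone.mpr hf]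
  rfl

lemma sortAsc_eq_of_map_univ_eq {f g : Fin n → ℝ} (h : univ.val.map f = univ.val.map g) :
    sortAsc f = sortAsc g := by
  have hperm : (List.ofFn f).Perm (List.ofFn g) := by
    simpa only [Fin.univ_val_map, Multiset.coe_eq_coe] using h
  refine List.ofFn_injective <| List.Perm.eq_of_sortedLE (monotone_sortAsc f).sortedLE_ofFn
    (monotone_sortAsc g).sortedLE_ofFn ?_
  exact ((Tuple.sort f).ofFn_comp_perm f).trans (hperm.trans ((Tuple.sort g).ofFn_comp_perm g).symm)

lemma sortDesc_of_antitone {f : Fin n → ℝ} (hf : Antitone f) : sortDesc f = f := by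
  have hrev : sortAsc f = f ∘ Fin.rev := by
    rw [← sortAsc_of_monotone (hf.comp Fin.rev_anti)]
    apply sortAsc_eq_of_map_univ_eq
    change _ = univ.val.map (f ∘ Fin.revPerm)
    rw [← Multiset.map_map, Multiset.map_univ_val_equiv]
  funext i
  simp [sortDesc, hrev]

lemma sum_mul_sortAsc_le_sum_mul_sortDesc {l : Fin n → ℝ} (hl : Antitone l) (f : Fin n → ℝ) :
    ∑ i, l i * sortAsc f i ≤ ∑ i, l i * sortDesc f i := by
  simpa [sortDesc, Fin.rev_rev] using
    (hl.monovary (antitone_sortDesc f)).sum_mul_comp_perm_le_sum_mul (σ := Fin.revPerm)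

end Sorting

lemma roots_prod_univ_X_sub_C {R ι : Type*} [CommRing R] [IsDomain R] [Fintype ι] (d : ι → R) :
    (∏ i, (X - C (d i))).roots = univ.val.map d := by
  rw [Finset.prod_eq_multiset_prod, ← roots_multiset_prod_X_sub_C (univ.val.map d),
    Multiset.map_map]
  rfl

lemma Matrix.IsHermitian.map_eigenvalues_diagonal {𝕜 ι : Type*} [RCLike 𝕜] [Fintype ι]
    [DecidableEq ι] {d : ι → ℝ} (hA : (diagonal (fun i => (d i : 𝕜))).IsHermitian) :
    univ.val.map hA.eigenvalues = univ.val.map d := by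
  have h := hA.roots_charpoly_eq_eigenvalues
  rw [charpoly_diagonal, roots_prod_univ_X_sub_C] at h
  apply Multiset.map_injective (RCLike.ofReal_injective (K := 𝕜))
  rw [Multiset.map_map, Multiset.map_map]
  exact h.symm

lemma Matrix.IsHermitian.sortDesc_eigenvalues_diagonal {𝕜 : Type*} [RCLike 𝕜] {n : ℕ}
    {d : Fin n → ℝ} (hd : Antitone d) (hA : (diagonal (fun i => (d i : 𝕜))).IsHermitian) :
    sortDesc hA.eigenvalues = d := by
  calc sortDesc hA.eigenvalues = sortDesc d :=
        funext fun i => congrFun (sortAsc_eq_of_map_univ_eq hA.map_eigenvalues_diagonal) i.rev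
    _ = d := sortDesc_of_antitone hd

section Majorization

variable {n : ℕ}

lemma psum_of_le (x : Fin n → ℝ) {k : ℕ} (hk : n ≤ k) : psum x k = ∑ i, x i := by
  rw [psum, filter_true_of_mem fun i _ => i.isLt.trans_le hk]

lemma psum_castSucc (x : Fin (n + 1) → ℝ) {k : ℕ} (hk : k ≤ n) :
    psum (fun i => x i.castSucc) k = psum x k := by
  simp only [psum, sum_filter, Fin.sum_univ_castSucc, Fin.val_castSucc, Fin.val_last,
    if_neg hk.not_gt, add_zero]

lemma psum_sub (x y : Fin n → ℝ) (k : ℕ) : psum (x - y) k = psum x k - psum y k :=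
  sum_sub_distrib ..

lemma sum_mul_ite_lt_eq_psum (x : Fin n → ℝ) (k : ℕ) :
    ∑ i, x i * (if (i : ℕ) < k then 1 else 0) = psum x k := by
  simp only [psum, sum_filter, mul_ite, mul_one, mul_zero]

lemma sum_mul_eq_sum_mul_sub_add (x μ : Fin n → ℝ) (c : ℝ) :
    ∑ i, x i * μ i = ∑ i, x i * (μ i - c) + c * ∑ i, x i := by
  simp only [mul_sub, sum_sub_distrib, ← sum_mul]
  ring

lemma sum_mul_nonneg_of_psum_nonneg {d μ : Fin n → ℝ} (hd : ∀ k ≤ n, 0 ≤ psum d k)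
    (hμ : Antitone μ) (hμ₀ : 0 ≤ μ) : 0 ≤ ∑ i, d i * μ i := by
  induction n with
  | zero => simp
  | succ n ih =>
    -- after subtracting `c` the last weight vanishes, leaving a sum over `Fin n`
    set c := μ (Fin.last n)
    have hrestrict : ∑ i, d i * (μ i - c) = ∑ i : Fin n, d i.castSucc * (μ i.castSucc - c) := by
      simp [Fin.sum_univ_castSucc, c]
    rw [sum_mul_eq_sum_mul_sub_add d μ c, hrestrict]
    refine add_nonneg (ih (fun k hk => ?_) ?_ ?_) (mul_nonneg (hμ₀ _) ?_)
    · rw [psum_castSucc d (by omega)]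
      exact hd k (by omega)
    · exact fun i j hij => sub_le_sub_right (hμ (Fin.castSucc_le_castSucc_iff.2 hij)) c
    · exact fun i => sub_nonneg.2 (hμ (Fin.le_last _))
    · simpa only [psum_of_le d le_rfl] using hd (n + 1) le_rfl

theorem majS_iff_forall_antitone {x y : Fin n → ℝ} :
    MajS x y ↔ ∀ μ : Fin n → ℝ, Antitone μ → ∑ i, x i * μ i ≤ ∑ i, y i * μ i := by
  constructor
  · rintro ⟨hpsum, htotal⟩ μ hμ
    rcases n with _ | n
    · simp
    -- shifting `μ` by its least value `c` changes both sides by `c * ∑ x = c * ∑ y`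
    set c := μ (Fin.last n)
    have hnonneg : 0 ≤ ∑ i, (y - x) i * (μ i - c) := by
      refine sum_mul_nonneg_of_psum_nonneg (fun k hk => ?_)
        (fun i j hij => sub_le_sub_right (hμ hij) c) (fun i => sub_nonneg.2 (hμ (Fin.le_last i)))
      rw [psum_sub, sub_nonneg]
      rcases hk.lt_or_eq with hk | rfl
      · exact hpsum k hk
      · rw [psum_of_le x le_rfl, psum_of_le y le_rfl, htotal]
    simp only [Pi.sub_apply, sub_mul, sum_sub_distrib, sub_nonneg] at hnonneg
    rw [sum_mul_eq_sum_mul_sub_add x μ c, sum_mul_eq_sum_mul_sub_add y μ c, htotal]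
    linarith
  · intro h
    refine ⟨fun k _ => ?_, le_antisymm ?_ ?_⟩
    · have hind : Antitone fun i : Fin n => if (i : ℕ) < k then (1 : ℝ) else 0 := by
        intro i j (hij : (i : ℕ) ≤ j)
        dsimp only
        split_ifs <;> first | omega | norm_num
      simpa only [sum_mul_ite_lt_eq_psum] using h _ hind
    · simpa using h (fun _ => 1) antitone_const
    · simpa using h (fun _ => -1) antitone_const

end Majorization

theorem forall_antitone_sum_mul_le_iff_interval_subset {n : ℕ} {l₁ l₂ : Fin n → ℝ}
    (hl₁ : Antitone l₁) :
    (∀ μ : Fin n → ℝ, Antitone μ → ∑ i, l₁ i * μ i ≤ ∑ i, l₂ i * μ i) ↔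
      ∀ (A : Matrix (Fin n) (Fin n) ℂ) (hA : A.IsHermitian),
        Set.Icc (∑ i, l₁ i * sortAsc hA.eigenvalues i) (∑ i, l₁ i * sortDesc hA.eigenvalues i) ⊆
        Set.Icc (∑ i, l₂ i * sortAsc hA.eigenvalues i) (∑ i, l₂ i * sortDesc hA.eigenvalues i) := by
  constructor
  · intro h A hA
    apply Set.Icc_subset_Icc
    · simpa only [mul_neg, sum_neg_distrib, neg_le_neg_iff] using
        h _ (monotone_sortAsc hA.eigenvalues).neg
    · exact h _ (antitone_sortDesc hA.eigenvalues)
  · intro h μ hμ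
    have hA : (diagonal fun i => (μ i : ℂ)).IsHermitian :=
      isHermitian_diagonal_of_self_adjoint _ (funext fun i => Complex.conj_ofReal (μ i))
    have hsubset := h _ hA ⟨sum_mul_sortAsc_le_sum_mul_sortDesc hl₁ _, le_rfl⟩
    simpa only [hA.sortDesc_eigenvalues_diagonal hμ] using hsubset.2

theorem maj_iff_forall_interval_subset_general {n : ℕ} (l₁ l₂ : Fin n → ℝ)
    (h₁ : memDeltaDown l₁) :
    MajS l₁ l₂ ↔
      ∀ (A : Matrix (Fin n) (Fin n) ℂ) (hA : A.IsHermitian),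
        Set.Icc (∑ i, l₁ i * sortAsc hA.eigenvalues i) (∑ i, l₁ i * sortDesc hA.eigenvalues i) ⊆
        Set.Icc (∑ i, l₂ i * sortAsc hA.eigenvalues i) (∑ i, l₂ i * sortDesc hA.eigenvalues i) :=
  majS_iff_forall_antitone.trans (forall_antitone_sum_mul_le_iff_interval_subset h₁.2.1)

/-- `λ₁ ≺ λ₂` iff for every Hermitian `A` the interval `[λ₁·λ↑(A), λ₁·λ↓(A)]` is contained in
`[λ₂·λ↑(A), λ₂·λ↓(A)]`. -/
theorem maj_iff_forall_interval_subset {n : ℕ} (l₁ l₂ : Fin n → ℝ)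
    (h₁ : memDeltaDown l₁) (h₂ : memDeltaDown l₂) :
    MajS l₁ l₂ ↔
      ∀ (A : Matrix (Fin n) (Fin n) ℂ) (hA : A.IsHermitian),
        Set.Icc (∑ i, l₁ i * sortAsc hA.eigenvalues i) (∑ i, l₁ i * sortDesc hA.eigenvalues i) ⊆
        Set.Icc (∑ i, l₂ i * sortAsc hA.eigenvalues i) (∑ i, l₂ i * sortDesc hA.eigenvalues i) :=
  maj_iff_forall_interval_subset_general l₁ l₂ h₁
end

section
/- The infimum of a nonempty set S ⊆ Δₙ↓ under majorization is given explicitly as follows: form the partial sums aₖ = inf_{x∈S} ∑_{i=1}^k xᵢ (with a₀ = 0, aₙ = 1); the sequence (aₖ) is concave and nonnegative nondecreasing, with increments forming a nonincreasing nonnegative vector, and the vector with entries aₖ − a_{k−1} lies in Δₙ↓ and is the greatest lower bound of S. -/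
lemma psum_zero {n : ℕ} (x : Fin n → ℝ) : psum x 0 = 0 := by
  simp [psum]

lemma psum_succ {n : ℕ} (x : Fin n → ℝ) {k : ℕ} (hk : k < n) :
    psum x (k + 1) = psum x k + x ⟨k, hk⟩ := by
  unfold psum
  have h : Finset.univ.filter (fun i : Fin n => (i : ℕ) < k + 1)
      = insert ⟨k, hk⟩ (Finset.univ.filter (fun i : Fin n => (i : ℕ) < k)) := by
    ext i
    simp only [Finset.mem_filter, Finset.mem_univ, true_and, Finset.mem_insert, Fin.ext_iff]
    omega
  rw [h, Finset.sum_insert (by simp)]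
  ring

lemma psum_total {n : ℕ} (x : Fin n → ℝ) {k : ℕ} (hk : n ≤ k) :
    psum x k = ∑ i, x i := by
  unfold psum
  congr 1
  apply Finset.filter_true_of_mem
  intro i _
  exact lt_of_lt_of_le i.isLt hk

lemma psum_mono {n : ℕ} (x : Fin n → ℝ) (hx : ∀ i, 0 ≤ x i) {k l : ℕ} (hkl : k ≤ l) :
    psum x k ≤ psum x l := by
  apply Finset.sum_le_sum_of_subset_of_nonneg
  · intro i hi
    simp only [Finset.mem_filter, Finset.mem_univ, true_and] at hi ⊢
    omega
  · intro i _ _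
    exact hx i

/-- Explicit infimum in the majorization lattice: with `aₖ = inf_{x∈S} ∑_{i<k} xᵢ`, the sequence
`(aₖ)` is nonnegative, nondecreasing, concave, with `a₀ = 0`, `aₙ = 1`; its increment vector lies
in `Δₙ↓`, is majorized by every element of `S`, and dominates every common lower bound. -/
theorem majorization_inf_explicit (n : ℕ) (S : Set (Fin n → ℝ))
    (hS : ∀ x ∈ S, memDeltaDown x) (hne : S.Nonempty)
    (a : ℕ → ℝ) (ha : ∀ k, a k = sInf {r : ℝ | ∃ x ∈ S, r = psum x k}) :
    a 0 = 0 ∧ a n = 1 ∧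
    (∀ k, 0 ≤ a k) ∧
    (∀ k l : ℕ, k ≤ l → a k ≤ a l) ∧
    (∀ k : ℕ, k + 2 ≤ n → a (k + 2) - a (k + 1) ≤ a (k + 1) - a k) ∧
    memDeltaDown (fun i : Fin n => a (i + 1) - a i) ∧
    (∀ x ∈ S, MajS (fun i : Fin n => a (i + 1) - a i) x) ∧
    (∀ z : Fin n → ℝ, memDeltaDown z → (∀ x ∈ S, MajS z x) →
      MajS z (fun i : Fin n => a (i + 1) - a i)) := by
  obtain ⟨x₀, hx₀⟩ := hne
  -- general facts about the infimum
  have hle : ∀ k, ∀ x ∈ S, a k ≤ psum x k := by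
    intro k x hx
    rw [ha k]
    apply csInf_le
    · refine ⟨0, ?_⟩
      rintro r ⟨y, hy, rfl⟩
      exact Finset.sum_nonneg (fun i _ => (hS y hy).1 i)
    · exact ⟨x, hx, rfl⟩
  have hlb : ∀ (k : ℕ) (c : ℝ), (∀ x ∈ S, c ≤ psum x k) → c ≤ a k := by
    intro k c hc
    rw [ha k]
    refine le_csInf ⟨psum x₀ k, x₀, hx₀, rfl⟩ ?_
    rintro r ⟨y, hy, rfl⟩
    exact hc y hy
  have h0 : a 0 = 0 := by
    refine le_antisymm ?_ (hlb 0 0 (fun x _ => by rw [psum_zero]))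
    have := hle 0 x₀ hx₀
    rwa [psum_zero] at this
  have hn : a n = 1 := by
    refine le_antisymm ?_ (hlb n 1 ?_)
    · have := hle n x₀ hx₀
      rwa [psum_total x₀ le_rfl, (hS x₀ hx₀).2.2] at this
    · intro x hx
      rw [psum_total x le_rfl, (hS x hx).2.2]
  have hnonneg : ∀ k, 0 ≤ a k := by
    intro k
    exact hlb k 0 (fun x hx => Finset.sum_nonneg (fun i _ => (hS x hx).1 i))
  have hmono : ∀ k l : ℕ, k ≤ l → a k ≤ a l := by
    intro k l hkl
    apply hlb l
    intro x hx
    exact (hle k x hx).trans (psum_mono x (hS x hx).1 hkl)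
  have hconc : ∀ k : ℕ, k + 2 ≤ n → a (k + 2) - a (k + 1) ≤ a (k + 1) - a k := by
    intro k hk
    have key : (a k + a (k + 2)) / 2 ≤ a (k + 1) := by
      apply hlb
      intro x hx
      have h1 : a k ≤ psum x k := hle k x hx
      have h2 : a (k + 2) ≤ psum x (k + 2) := hle (k + 2) x hx
      have e1 : psum x (k + 1) = psum x k + x ⟨k, by omega⟩ := psum_succ x (by omega)
      have e2 : psum x (k + 2) = psum x (k + 1) + x ⟨k + 1, by omega⟩ :=
        psum_succ x (by omega)
      have hanti : x ⟨k + 1, by omega⟩ ≤ x ⟨k, by omega⟩ :=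
        (hS x hx).2.1 (show (⟨k, by omega⟩ : Fin n) ≤ ⟨k + 1, by omega⟩ by
          simp [Fin.le_def])
      linarith
    linarith
  set v : Fin n → ℝ := fun i : Fin n => a (i + 1) - a i with hv
  -- telescoping
  have htel : ∀ k, k ≤ n → psum v k = a k := by
    intro k
    induction k with
    | zero => intro _; rw [psum_zero, h0]
    | succ k ih =>
      intro hk
      rw [psum_succ v (show k < n by omega), ih (by omega)]
      show a k + (a (k + 1) - a k) = a (k + 1)
      ring
  have hsumv : ∑ i, v i = 1 := by
    rw [← psum_total v le_rfl, htel n le_rfl, hn]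
  -- antitone increments
  have hstep : ∀ p q : ℕ, p ≤ q → q + 1 ≤ n → a (q + 1) - a q ≤ a (p + 1) - a p := by
    intro p q
    induction q with
    | zero =>
      intro hpq _
      have : p = 0 := Nat.le_zero.mp hpq
      simp [this]
    | succ q ih =>
      intro hpq hq
      rcases Nat.lt_or_ge p (q + 1) with h | h
      · have h1 := ih (by omega) (by omega)
        have h2 := hconc q (by omega)
        linarith
      · have : p = q + 1 := by omega
        simp [this]
  have hmemv : memDeltaDown v := by
    refine ⟨fun i => ?_, fun i j hij => ?_, hsumv⟩
    · have := hmono i (i + 1) (by omega)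
      simp only [hv]
      linarith
    · exact hstep i j hij (by omega)
  have hmaj : ∀ x ∈ S, MajS v x := by
    intro x hx
    refine ⟨fun k hk => ?_, ?_⟩
    · rw [htel k (by omega)]
      exact hle k x hx
    · rw [hsumv, (hS x hx).2.2]
  refine ⟨h0, hn, hnonneg, hmono, hconc, hmemv, hmaj, ?_⟩
  intro z hz hzx
  refine ⟨fun k hk => ?_, ?_⟩
  · rw [htel k (by omega)]
    exact hlb k (psum z k) (fun x hx => (hzx x hx).1 k hk)
  · rw [hsumv, (hzx x₀ hx₀).2, (hS x₀ hx₀).2.2]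
end
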